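/- (Ascending Landen transformation) For 0 < k < 1, (1+k)·K(k) = K(2√k/(1+k)), where K is the complete elliptic integral of the first kind. -/

import Mathlib

/-!
Substitute `θ = 2φ - arg (1 + k e^{2iφ})` in `∫₀^π dθ / √(1 - k² sin² θ) = 2 K(k)`; as `φ` runs
over `[0, π/2]`, `θ` runs over `[0, π]`. Writing `Q(φ) = |1 + k e^{2iφ}|² = 1 + 2k cos 2φ + k²`,
one has `sin θ = sin 2φ / √Q`, `√(1 - k² sin² θ) = (1 + k cos 2φ) / √Q` and
`dθ = 2 (1 + k cos 2φ) / Q dφ`, so the integrand becomes `2 dφ / √Q`. Finally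
`Q = (1 + k)² - 4k sin² φ = (1 + k)² (1 - k₁² sin² φ)` with `k₁ = 2√k / (1 + k)`.
-/

open Real Set

/-- Complete elliptic integral of the first kind. -/
noncomputable def ellK (k : ℝ) : ℝ :=
  ∫ θ in (0:ℝ)..(π/2), 1 / Real.sqrt (1 - k^2 * Real.sin θ ^ 2)

theorem intervalIntegral_zero_pi_eq_two_mul_of_symm {f : ℝ → ℝ} (hf : Continuous f)
    (hsymm : ∀ θ, f (π - θ) = f θ) :
    ∫ θ in (0:ℝ)..π, f θ = 2 * ∫ θ in (0:ℝ)..(π/2), f θ := by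
  have hupper : ∫ θ in (π/2)..π, f θ = ∫ θ in (0:ℝ)..(π/2), f θ := by
    have := intervalIntegral.integral_comp_sub_left f π (a := 0) (b := π/2)
    simp only [hsymm, sub_zero, sub_half] at this
    exact this.symm
  rw [← intervalIntegral.integral_add_adjacent_intervals (b := π/2)
    (hf.intervalIntegrable _ _) (hf.intervalIntegrable _ _), hupper]
  ring

noncomputable def landenAngle (k φ : ℝ) : ℝ :=
  2 * φ - arctan (k * sin (2 * φ) / (1 + k * cos (2 * φ)))

section

variable {k : ℝ}

theorem one_sub_sq_mul_sin_sq_pos (hk : |k| < 1) (θ : ℝ) : 0 < 1 - k ^ 2 * sin θ ^ 2 := by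
  have hk2 : k ^ 2 < 1 := by rw [← sq_abs]; nlinarith [abs_nonneg k]
  nlinarith [sin_sq_le_one θ, sq_nonneg (sin θ)]

theorem continuous_inv_sqrt_one_sub_sq_mul_sin_sq (hk : |k| < 1) :
    Continuous fun θ => 1 / √(1 - k ^ 2 * sin θ ^ 2) :=
  continuous_const.div (by fun_prop) fun θ => (sqrt_pos.mpr (one_sub_sq_mul_sin_sq_pos hk θ)).ne'

theorem one_add_mul_cos_pos (hk : |k| < 1) (x : ℝ) : 0 < 1 + k * cos x := by
  have : |k * cos x| < 1 := by
    rw [abs_mul]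
    exact (mul_le_of_le_one_right (abs_nonneg k) (abs_cos_le_one x)).trans_lt hk
  linarith [neg_abs_le (k * cos x)]

theorem one_add_two_mul_cos_add_sq_eq (x : ℝ) :
    1 + 2 * k * cos x + k ^ 2 = (1 + k * cos x) ^ 2 + (k * sin x) ^ 2 := by
  linear_combination (-k ^ 2) * sin_sq_add_cos_sq x

theorem one_add_two_mul_cos_add_sq_pos (hk : |k| < 1) (x : ℝ) :
    0 < 1 + 2 * k * cos x + k ^ 2 := by
  rw [one_add_two_mul_cos_add_sq_eq]
  have := one_add_mul_cos_pos hk x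
  positivity

theorem hasDerivAt_landenAngle (hk : |k| < 1) (φ : ℝ) :
    HasDerivAt (landenAngle k)
      (2 * (1 + k * cos (2 * φ)) / (1 + 2 * k * cos (2 * φ) + k ^ 2)) φ := by
  have hden := one_add_mul_cos_pos hk (2 * φ)
  have hQ := one_add_two_mul_cos_add_sq_pos hk (2 * φ)
  have h2 : HasDerivAt (fun φ : ℝ => 2 * φ) 2 φ := by
    simpa using (hasDerivAt_id φ).const_mul 2
  have hquot := (h2.sin.const_mul k).div ((h2.cos.const_mul k).const_add 1) hden.ne'
  refine (h2.sub hquot.arctan).congr_deriv ?_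
  simp only [Pi.div_apply]
  field_simp
  linear_combination (-(k ^ 2 + k ^ 3 * cos (2 * φ))) * sin_sq_add_cos_sq (2 * φ)

theorem landenAngle_zero : landenAngle k 0 = 0 := by
  simp [landenAngle]

theorem landenAngle_pi_div_two : landenAngle k (π / 2) = π := by
  simp [landenAngle, mul_div_cancel₀]

theorem sqrt_one_add_sq_mul_sin_div (hk : |k| < 1) (x : ℝ) :
    √(1 + (k * sin x / (1 + k * cos x)) ^ 2)
      = √(1 + 2 * k * cos x + k ^ 2) / (1 + k * cos x) := by
  have hden := one_add_mul_cos_pos hk x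
  have h : 1 + (k * sin x / (1 + k * cos x)) ^ 2
      = (1 + 2 * k * cos x + k ^ 2) / (1 + k * cos x) ^ 2 := by
    rw [one_add_two_mul_cos_add_sq_eq]
    field_simp
  rw [h, sqrt_div' _ (sq_nonneg _), sqrt_sq hden.le]

theorem sin_landenAngle (hk : |k| < 1) (φ : ℝ) :
    sin (landenAngle k φ) = sin (2 * φ) / √(1 + 2 * k * cos (2 * φ) + k ^ 2) := by
  have hden := one_add_mul_cos_pos hk (2 * φ)
  have hQ := sqrt_pos.mpr (one_add_two_mul_cos_add_sq_pos hk (2 * φ))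
  rw [landenAngle, sin_sub, sin_arctan, cos_arctan, sqrt_one_add_sq_mul_sin_div hk]
  field_simp
  ring

theorem sqrt_one_sub_sq_mul_sin_sq_landenAngle (hk : |k| < 1) (φ : ℝ) :
    √(1 - k ^ 2 * sin (landenAngle k φ) ^ 2)
      = (1 + k * cos (2 * φ)) / √(1 + 2 * k * cos (2 * φ) + k ^ 2) := by
  have hden := one_add_mul_cos_pos hk (2 * φ)
  have hQ := one_add_two_mul_cos_add_sq_pos hk (2 * φ)
  have hQ' := hQ.ne'
  have hsq : 1 - k ^ 2 * sin (landenAngle k φ) ^ 2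
      = (1 + k * cos (2 * φ)) ^ 2 / (1 + 2 * k * cos (2 * φ) + k ^ 2) := by
    rw [sin_landenAngle hk, div_pow, sq_sqrt hQ.le, eq_div_iff hQ', sub_mul, mul_div_assoc',
      div_mul_cancel₀ _ hQ']
    linear_combination (-k ^ 2) * sin_sq_add_cos_sq (2 * φ)
  rw [hsq, sqrt_div (sq_nonneg _), sqrt_sq hden.le]

theorem landenAngle_deriv_mul_inv_sqrt (hk : |k| < 1) (φ : ℝ) :
    2 * (1 + k * cos (2 * φ)) / (1 + 2 * k * cos (2 * φ) + k ^ 2)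
        * (1 / √(1 - k ^ 2 * sin (landenAngle k φ) ^ 2))
      = 2 * (1 / √(1 + 2 * k * cos (2 * φ) + k ^ 2)) := by
  have hden := (one_add_mul_cos_pos hk (2 * φ)).ne'
  have hQ := one_add_two_mul_cos_add_sq_pos hk (2 * φ)
  rw [sqrt_one_sub_sq_mul_sin_sq_landenAngle hk]
  field_simp
  rw [sq_sqrt hQ.le]

theorem ellK_eq_integral_inv_sqrt_one_add_two_mul_cos_add_sq (hk : |k| < 1) :
    ellK k = ∫ φ in (0:ℝ)..(π/2), 1 / √(1 + 2 * k * cos (2 * φ) + k ^ 2) := by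
  have hf := continuous_inv_sqrt_one_sub_sq_mul_sin_sq hk
  have hderiv :
      Continuous fun φ => 2 * (1 + k * cos (2 * φ)) / (1 + 2 * k * cos (2 * φ) + k ^ 2) :=
    (by fun_prop : Continuous _).div (by fun_prop) fun φ =>
      (one_add_two_mul_cos_add_sq_pos hk _).ne'
  have hsubst := intervalIntegral.integral_deriv_smul_comp
    (fun φ _ => hasDerivAt_landenAngle hk φ) hderiv.continuousOn hf (a := 0) (b := π / 2)
  rw [landenAngle_zero, landenAngle_pi_div_two,
    intervalIntegral_zero_pi_eq_two_mul_of_symm hf fun θ => by rw [sin_pi_sub]] at hsubst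
  simp only [Function.comp_apply, smul_eq_mul, landenAngle_deriv_mul_inv_sqrt hk,
    intervalIntegral.integral_const_mul] at hsubst
  rw [ellK]
  linarith

theorem ellK_two_mul_sqrt_div_one_add (hk : 0 ≤ k) :
    ellK (2 * √k / (1 + k))
      = (1 + k) * ∫ φ in (0:ℝ)..(π/2), 1 / √(1 + 2 * k * cos (2 * φ) + k ^ 2) := by
  have hk1 : 0 < 1 + k := by linarith
  rw [ellK, ← intervalIntegral.integral_const_mul]
  refine intervalIntegral.integral_congr fun φ _ => ?_
  have hmod : 1 - (2 * √k / (1 + k)) ^ 2 * sin φ ^ 2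
      = (1 + 2 * k * cos (2 * φ) + k ^ 2) / (1 + k) ^ 2 := by
    rw [div_pow, mul_pow, sq_sqrt hk, cos_two_mul]
    field_simp
    linear_combination (-4 * k) * sin_sq_add_cos_sq φ
  simp only [hmod, sqrt_div' _ (sq_nonneg _), sqrt_sq hk1.le, one_div_div, mul_one_div]

end

/-- Ascending Landen transformation. -/
theorem landen (k : ℝ) (hk : k ∈ Ioo (0:ℝ) 1) :
    (1 + k) * ellK k = ellK (2 * Real.sqrt k / (1 + k)) := by
  rw [ellK_two_mul_sqrt_div_one_add hk.1.le,
    ellK_eq_integral_inv_sqrt_one_add_two_mul_cos_add_sq (abs_lt.mpr ⟨by linarith [hk.1], hk.2⟩)]
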